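/- The q-Pfaff–Saalschütz summation: for a nonnegative integer n and complex a, b, c, q with c, abq^{1-n}/c not equal to q^{-m} for 0 ≤ m < n, ∑_{k=0}^{n} ((a;q)_k (b;q)_k (q^{-n};q)_k / ((q;q)_k (c;q)_k (abq^{1-n}/c; q)_k)) q^k = (c/a;q)_n (c/b;q)_n / ((c;q)_n (c/(ab);q)_n). -/

import Mathlib

/-!
Induction on `n` via a Wilf–Zeilberger pair. Let `t n k` be the `k`-th summand, `S n` the sum and
`ρ n` the ratio of consecutive right-hand sides. With the rational certificate `G n k` one has
`t (n+1) k - ρ n * t n k = G n (k+1) - G n k` for `k ≤ n`, and the extra top term is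
`t (n+1) (n+1) = -G n (n+1)`. Summing over `k` telescopes to `S (n+1) = ρ n * S n`.
-/

/-- Finite q-Pochhammer symbol: (a;q)_n = ∏_{k=0}^{n-1} (1 - a q^k). -/
noncomputable def qp (a q : ℂ) (n : ℕ) : ℂ := ∏ k ∈ Finset.range n, (1 - a * q ^ k)

/-- Infinite q-Pochhammer symbol: (a;q)_∞ = ∏_{k=0}^∞ (1 - a q^k). -/
noncomputable def qpInf (a q : ℂ) : ℂ := ∏' k : ℕ, (1 - a * q ^ k)

section QPochhammer

@[simp]
lemma qp_zero (A q : ℂ) : qp A q 0 = 1 := Finset.prod_range_zero _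

lemma qp_succ (A q : ℂ) (k : ℕ) : qp A q (k + 1) = qp A q k * (1 - A * q ^ k) :=
  Finset.prod_range_succ _ _

variable {A q : ℂ} {n k : ℕ}

lemma qp_div_succ (hq : q ≠ 0) (A : ℂ) (k : ℕ) :
    qp (A / q) q (k + 1) = (1 - A / q) * qp A q k := by
  rw [qp, Finset.prod_range_succ', qp, mul_comm]
  congr 1
  · simp
  · refine Finset.prod_congr rfl fun i _ => ?_
    rw [pow_succ]
    field_simp

lemma qp_div_succ_ne_zero_iff (hq : q ≠ 0) :
    qp (A / q) q (k + 1) ≠ 0 ↔ 1 - A / q ≠ 0 ∧ qp A q k ≠ 0 := by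
  rw [qp_div_succ hq, mul_ne_zero_iff]

lemma qp_ne_zero (h : ∀ m < n, A * q ^ m ≠ 1) : qp A q n ≠ 0 :=
  Finset.prod_ne_zero_iff.2 fun m hm => sub_ne_zero.2 (h m (Finset.mem_range.1 hm)).symm

lemma qp_ne_zero_of_forall_ne_zpow (h : ∀ m < n, A ≠ q ^ (-(m : ℤ))) : qp A q n ≠ 0 :=
  qp_ne_zero fun m hm hAm => h m hm <| by
    rw [zpow_neg, zpow_natCast]
    exact eq_inv_of_mul_eq_one_left hAm

lemma one_sub_mul_pow_ne_zero_of_qp_ne_zero (h : qp A q n ≠ 0) (hk : k < n) :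
    1 - A * q ^ k ≠ 0 :=
  Finset.prod_ne_zero_iff.1 h k (Finset.mem_range.2 hk)

lemma qp_ne_zero_of_le (h : qp A q n ≠ 0) (hk : k ≤ n) : qp A q k ≠ 0 :=
  Finset.prod_ne_zero_iff.2 fun _ hm =>
    one_sub_mul_pow_ne_zero_of_qp_ne_zero h ((Finset.mem_range.1 hm).trans_le hk)

end QPochhammer

lemma inv_pow_succ_eq_div (q : ℂ) (n : ℕ) : (q ^ (n + 1))⁻¹ = (q ^ n)⁻¹ / q := by
  rw [pow_succ, mul_inv, div_eq_mul_inv]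

lemma div_mul_pow_succ_eq_div_div (x c q : ℂ) (n : ℕ) :
    x / (c * q ^ (n + 1)) = x / (c * q ^ n) / q := by
  ring

/-- The summand of the theorem, with `q^{-n}` and `abq^{1-n}/c` written as `(q^n)⁻¹` and
`abq/(cq^n)`. -/
noncomputable def saalschutzTerm (q a b c : ℂ) (n k : ℕ) : ℂ :=
  qp a q k * qp b q k * qp (q ^ n)⁻¹ q k /
    (qp q q k * qp c q k * qp (a * b * q / (c * q ^ n)) q k) * q ^ k

noncomputable def saalschutzRatio (q a b c : ℂ) (n : ℕ) : ℂ :=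
  (1 - c / a * q ^ n) * (1 - c / b * q ^ n) / ((1 - c * q ^ n) * (1 - c / (a * b) * q ^ n))

/-- `saalschutzTerm q a b c n (j + 1)` times a rational function of `q ^ j`, multiplied out so that
nothing is divided by the factor `1 - q ^ j / q ^ n`, which vanishes at `j = n`. -/
noncomputable def saalschutzCertificate (q a b c : ℂ) (n : ℕ) : ℕ → ℂ
  | 0 => 0
  | j + 1 => qp a q (j + 1) * qp b q (j + 1) * qp (q ^ n)⁻¹ q j /
      (qp q q j * qp c q j * qp (a * b * q / (c * q ^ n)) q j *
        ((1 - c * q ^ n) * (1 - a * b / (c * q ^ n))))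

section Telescoping

variable {q a b c : ℂ} {n j : ℕ}

lemma saalschutzTerm_zero_sub (hq : q ≠ 0) (ha : a ≠ 0) (hb : b ≠ 0) (hc : c ≠ 0)
    (hcM : 1 - c * q ^ n ≠ 0) (hab : a * b ≠ c * q ^ n) :
    saalschutzTerm q a b c (n + 1) 0 - saalschutzRatio q a b c n * saalschutzTerm q a b c n 0 =
      saalschutzCertificate q a b c n 1 - saalschutzCertificate q a b c n 0 := by
  have hM : q ^ n ≠ 0 := pow_ne_zero n hq
  simp only [saalschutzTerm, saalschutzRatio, saalschutzCertificate, zero_add, qp_succ, qp_zero,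
    pow_zero, mul_one, one_mul, div_one, sub_zero]
  generalize q ^ n = M at *
  field_simp
  ring

lemma saalschutzTerm_succ_sub (hq : q ≠ 0) (ha : a ≠ 0) (hb : b ≠ 0) (hc : c ≠ 0)
    (hQ : qp q q (j + 1) ≠ 0) (hC : qp c q (j + 1) ≠ 0)
    (hV : qp (a * b * q / (c * q ^ n)) q (j + 1) ≠ 0)
    (hcM : 1 - c * q ^ n ≠ 0) (hab : a * b ≠ c * q ^ n) :
    saalschutzTerm q a b c (n + 1) (j + 1) -
        saalschutzRatio q a b c n * saalschutzTerm q a b c n (j + 1) =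
      saalschutzCertificate q a b c n (j + 2) - saalschutzCertificate q a b c n (j + 1) := by
  rw [qp_succ] at hQ hC hV
  obtain ⟨hQ, hqx⟩ := mul_ne_zero_iff.1 hQ
  obtain ⟨hC, hcx⟩ := mul_ne_zero_iff.1 hC
  obtain ⟨hV, hvx⟩ := mul_ne_zero_iff.1 hV
  have hM : q ^ n ≠ 0 := pow_ne_zero n hq
  simp only [saalschutzTerm, saalschutzRatio, saalschutzCertificate, inv_pow_succ_eq_div,
    div_mul_pow_succ_eq_div_div, qp_div_succ hq, qp_succ (k := j + 1), qp_succ (k := j),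
    pow_succ q j]
  generalize q ^ n = M at *
  generalize q ^ j = x at *
  set v := a * b * q / (c * M)
  set X := c * M
  have hv : v / q = a * b / X := by simp only [v, X]; field_simp
  have hρ : (1 - c / a * M) * (1 - c / b * M) / ((1 - X) * (1 - c / (a * b) * M)) =
      (a - X) * (b - X) / ((1 - X) * (a * b - X)) := by
    simp only [X]; field_simp
  rw [hv, hρ]
  have hX : X ≠ 0 := mul_ne_zero hc hM
  -- as atoms, the factors known to be nonzero survive `field_simp`'s normalisation of products
  set Q1 := 1 - q * x
  set C1 := 1 - c * x
  set V1 := 1 - v * x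
  field_simp
  simp only [v, X, Q1, C1, V1]
  field_simp
  ring

lemma saalschutzTerm_top (hq : q ≠ 0) (hqn : 1 - q * q ^ n ≠ 0) :
    saalschutzTerm q a b c (n + 1) (n + 1) = -saalschutzCertificate q a b c n (n + 1) := by
  have hM : q ^ n ≠ 0 := pow_ne_zero n hq
  simp only [saalschutzTerm, saalschutzCertificate, inv_pow_succ_eq_div,
    div_mul_pow_succ_eq_div_div]
  rw [qp_div_succ hq, qp_div_succ hq]
  simp only [qp_succ a q n, qp_succ b q n, qp_succ q q n, qp_succ c q n, pow_succ q n]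
  generalize q ^ n = M at *
  set Q1 := 1 - q * M
  field_simp
  simp only [Q1]
  ring

lemma sum_saalschutzTerm_succ (hq : q ≠ 0) (ha : a ≠ 0) (hb : b ≠ 0) (hc : c ≠ 0)
    (hQ : qp q q (n + 1) ≠ 0) (hC : qp c q (n + 1) ≠ 0)
    (hV : qp (a * b * q / (c * q ^ (n + 1))) q (n + 1) ≠ 0) :
    ∑ k ∈ Finset.range (n + 2), saalschutzTerm q a b c (n + 1) k =
      saalschutzRatio q a b c n * ∑ k ∈ Finset.range (n + 1), saalschutzTerm q a b c n k := by
  rw [div_mul_pow_succ_eq_div_div, qp_div_succ_ne_zero_iff hq] at hV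
  obtain ⟨hab, hV⟩ := hV
  replace hab : a * b ≠ c * q ^ n := by
    rintro hab'
    apply hab
    rw [hab', mul_div_cancel_left₀ _ (mul_ne_zero hc (pow_ne_zero n hq)), div_self hq, sub_self]
  have hcM := one_sub_mul_pow_ne_zero_of_qp_ne_zero hC n.lt_succ_self
  have step : ∀ k ∈ Finset.range (n + 1), saalschutzTerm q a b c (n + 1) k =
      saalschutzRatio q a b c n * saalschutzTerm q a b c n k +
        (saalschutzCertificate q a b c n (k + 1) - saalschutzCertificate q a b c n k) := by
    intro k hk
    rw [← sub_eq_iff_eq_add']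
    rcases k with _ | j
    · exact saalschutzTerm_zero_sub hq ha hb hc hcM hab
    · have hj : j + 1 ≤ n := Nat.lt_succ_iff.1 (Finset.mem_range.1 hk)
      exact saalschutzTerm_succ_sub hq ha hb hc (qp_ne_zero_of_le hQ (by omega))
        (qp_ne_zero_of_le hC (by omega)) (qp_ne_zero_of_le hV hj) hcM hab
  rw [Finset.sum_range_succ, Finset.sum_congr rfl step, Finset.sum_add_distrib,
    Finset.sum_range_sub, ← Finset.mul_sum,
    saalschutzTerm_top hq (one_sub_mul_pow_ne_zero_of_qp_ne_zero hQ n.lt_succ_self)]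
  simp only [saalschutzCertificate]
  ring

end Telescoping

theorem sum_saalschutzTerm {q a b c : ℂ} (hq : q ≠ 0) (ha : a ≠ 0) (hb : b ≠ 0) (hc : c ≠ 0) :
    ∀ n : ℕ, qp q q n ≠ 0 → qp c q n ≠ 0 → qp (a * b * q / (c * q ^ n)) q n ≠ 0 →
      ∑ k ∈ Finset.range (n + 1), saalschutzTerm q a b c n k =
        qp (c / a) q n * qp (c / b) q n / (qp c q n * qp (c / (a * b)) q n)
  | 0, _, _, _ => by simp [saalschutzTerm]
  | n + 1, hQ, hC, hV => by
    have hV' := hV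
    rw [div_mul_pow_succ_eq_div_div, qp_div_succ_ne_zero_iff hq] at hV'
    rw [sum_saalschutzTerm_succ hq ha hb hc hQ hC hV,
      sum_saalschutzTerm hq ha hb hc n (qp_ne_zero_of_le hQ n.le_succ)
        (qp_ne_zero_of_le hC n.le_succ) hV'.2]
    simp only [saalschutzRatio, qp_succ]
    rw [div_mul_div_comm]
    congr 1 <;> ring

/-- The q-Pfaff–Saalschütz summation. -/
theorem q_pfaff_saalschutz (q a b c : ℂ) (n : ℕ) (hq0 : q ≠ 0)
    (ha : a ≠ 0) (hb : b ≠ 0) (hc0 : c ≠ 0)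
    (hroot : ∀ k : ℕ, 1 ≤ k → k ≤ n → q ^ k ≠ 1)
    (hc : ∀ m : ℕ, m < n → c ≠ q ^ (-(m : ℤ)))
    (hd : ∀ m : ℕ, m < n → a * b * q ^ ((1 : ℤ) - n) / c ≠ q ^ (-(m : ℤ))) :
    ∑ k ∈ Finset.range (n + 1),
        qp a q k * qp b q k * qp (q ^ (-(n : ℤ))) q k /
          (qp q q k * qp c q k * qp (a * b * q ^ ((1 : ℤ) - n) / c) q k) * q ^ k
      = qp (c / a) q n * qp (c / b) q n / (qp c q n * qp (c / (a * b)) q n) := by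
  have hu : q ^ (-(n : ℤ)) = (q ^ n)⁻¹ := by rw [zpow_neg, zpow_natCast]
  have hv : a * b * q ^ ((1 : ℤ) - n) / c = a * b * q / (c * q ^ n) := by
    rw [zpow_sub₀ hq0, zpow_one, zpow_natCast]
    ring
  rw [hv] at hd
  rw [hu, hv]
  exact sum_saalschutzTerm hq0 ha hb hc0 n
    (qp_ne_zero fun m hm => by rw [← pow_succ']; exact hroot (m + 1) (by omega) hm)
    (qp_ne_zero_of_forall_ne_zpow hc) (qp_ne_zero_of_forall_ne_zpow hd)
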